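/- arXiv:2207.05479 — 3 statements merged into one kernel-verified Lean document; each statement's English description precedes it below -/
import Mathlib

section
/- There exists a family S of q^2 + 1 two-dimensional subspaces of F_q^4 such that every nonzero vector of F_q^4 lies in exactly one member of S (equivalently, any two distinct members of S intersect only in the zero vector and the members of S cover F_q^4). -/
/-!
Let `K` be the quadratic extension of `F = 𝔽_q`. The `q ^ 2 + 1` points of the projective line
over `K` are the `K`-lines of `K ^ 2`; each is a `2`-dimensional `F`-subspace of `K ^ 2 ≅ F ^ 4`,
and every nonzero vector lies on exactly one of them (the Desarguesian spread).
-/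

open scoped LinearAlgebra.Projectivization

namespace Projectivization

variable {K V : Type*} [Field K] [AddCommGroup V] [Module K V]

theorem mem_submodule_iff (p : ℙ K V) {v : V} (hv : v ≠ 0) :
    v ∈ p.submodule ↔ p = mk K v hv := by
  induction p using ind with | h w hw =>
  rw [submodule_mk, Submodule.mem_span_singleton, eq_comm, mk_eq_mk_iff']

theorem existsUnique_mem_submodule {v : V} (hv : v ≠ 0) : ∃! p : ℙ K V, v ∈ p.submodule := by
  simp only [mem_submodule_iff _ hv, existsUnique_eq]

variable {F W : Type*} [Field F] [Algebra F K] [Module F V] [IsScalarTower F K V]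
  [AddCommGroup W] [Module F W]

def restrictScalarsSubmodule (e : V ≃ₗ[F] W) (p : ℙ K V) : Submodule F W :=
  (p.submodule.restrictScalars F).map (e : V →ₗ[F] W)

theorem restrictScalarsSubmodule_injective (e : V ≃ₗ[F] W) :
    Function.Injective (restrictScalarsSubmodule (K := K) e) :=
  (Submodule.map_injective_of_injective e.injective).comp <|
    (Submodule.restrictScalars_injective F K V).comp submodule_injective

theorem finrank_restrictScalarsSubmodule (e : V ≃ₗ[F] W) (p : ℙ K V) :
    Module.finrank F (restrictScalarsSubmodule e p) = Module.finrank F K := by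
  rw [restrictScalarsSubmodule, e.finrank_map_eq, ← Module.finrank_mul_finrank F K,
    (Submodule.restrictScalarsEquiv F K V p.submodule).finrank_eq, finrank_submodule, mul_one]

theorem existsUnique_mem_restrictScalarsSubmodule (e : V ≃ₗ[F] W) {w : W} (hw : w ≠ 0) :
    ∃! p : ℙ K V, w ∈ restrictScalarsSubmodule e p := by
  simp only [restrictScalarsSubmodule, Submodule.mem_map_equiv]
  exact existsUnique_mem_submodule (by simpa using hw)

end Projectivization

/-- There exists a spread of lines in `PG(3,q)`: a family of `q^2 + 1`
2-dimensional subspaces of `F_q^4` such that every nonzero vector lies in exactly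
one member of the family. -/
theorem stmt_4 (q : ℕ) (F : Type*) [Field F] [Fintype F] (hq : Fintype.card F = q) :
    ∃ S : Finset (Submodule F (Fin 4 → F)),
      S.card = q ^ 2 + 1 ∧ (∀ W ∈ S, Module.finrank F W = 2) ∧
      ∀ v : Fin 4 → F, v ≠ 0 → ∃! W : Submodule F (Fin 4 → F), W ∈ S ∧ v ∈ W := by
  classical
  obtain ⟨p, _⟩ := CharP.exists F
  have : Fact p.Prime := ⟨CharP.char_is_prime F p⟩
  let K := FiniteField.Extension F p 2
  have hK : Module.finrank F K = 2 := FiniteField.finrank_extension F p 2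
  have hV : Module.finrank F (Fin 2 → K) = Module.finrank F (Fin 4 → F) := by
    rw [← Module.finrank_mul_finrank F K, hK]
    simp
  obtain ⟨e⟩ := FiniteDimensional.nonempty_linearEquiv_of_finrank_eq hV
  have := Fintype.ofFinite (ℙ K (Fin 2 → K))
  let spread := Projectivization.restrictScalarsSubmodule (K := K) e
  refine ⟨Finset.univ.image spread, ?_, ?_, fun v hv => ?_⟩
  · rw [Finset.card_image_of_injective _ (Projectivization.restrictScalarsSubmodule_injective e),
      Finset.card_univ, ← Nat.card_eq_fintype_card,
      Projectivization.card_of_finrank_two K _ (by simp), FiniteField.natCard_extension,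
      Nat.card_eq_fintype_card, hq]
  · simp only [Finset.mem_image, Finset.mem_univ, true_and, forall_exists_index]
    rintro _ P rfl
    rw [Projectivization.finrank_restrictScalarsSubmodule, hK]
  · obtain ⟨P, hP, hP_unique⟩ :=
      Projectivization.existsUnique_mem_restrictScalarsSubmodule (K := K) e hv
    refine ⟨spread P, ⟨Finset.mem_image_of_mem _ (Finset.mem_univ P), hP⟩, ?_⟩
    simp only [Finset.mem_image, Finset.mem_univ, true_and, and_imp, forall_exists_index]
    rintro _ P' rfl hP'
    rw [hP_unique P' hP']
end

section
/- Let C be a set of binary vectors of length n, each of Hamming weight w, such that any two distinct elements of C have Hamming distance at least 2δ, and let M = |C|. Then M · (w^2 − w·n + δ·n) ≤ δ·n. -/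
/-!
Let `kᵢ` be the number of codewords with a `1` in coordinate `i`. Counting the pairs
(codeword, coordinate) in their supports gives `∑ kᵢ = M w`, and counting triples gives
`∑ kᵢ² = ∑_{c, c'} |supp c ∩ supp c'|`. A codeword meets itself in `w` coordinates and any
other codeword in at most `w - δ`, since `2 |supp c ∩ supp c'| + d(c, c') = 2w`. Cauchy–Schwarz,
`(∑ kᵢ)² ≤ n ∑ kᵢ²`, then yields `(M w)² ≤ n M (w + (M - 1)(w - δ))`, which after dividing
by `M` is the bound.
-/

open Finset

theorem sum_sum_le_of_diag_of_offDiag {α R : Type*} [DecidableEq α] [Ring R] [PartialOrder R]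
    [IsOrderedRing R] (s : Finset α) (f : α → α → R) (a b : R)
    (hdiag : ∀ x ∈ s, f x x = a) (hoff : ∀ x ∈ s, ∀ y ∈ s, x ≠ y → f x y ≤ b) :
    ∑ x ∈ s, ∑ y ∈ s, f x y ≤ #s * (a + (#s - 1) * b) := by
  have hrow : ∀ x ∈ s, ∑ y ∈ s, f x y ≤ a + (#s - 1) * b := by
    intro x hx
    have hrest := sum_le_card_nsmul (s.erase x) (f x) b fun y hy =>
      hoff x hx y (mem_of_mem_erase hy) (ne_of_mem_erase hy).symm
    rw [nsmul_eq_mul, card_erase_of_mem hx, Nat.cast_pred (card_pos.2 ⟨x, hx⟩)] at hrest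
    rw [← add_sum_erase s _ hx, hdiag x hx]
    exact add_le_add le_rfl hrest
  calc ∑ x ∈ s, ∑ y ∈ s, f x y ≤ ∑ _x ∈ s, (a + (#s - 1) * b) := sum_le_sum hrow
    _ = #s * (a + (#s - 1) * b) := by rw [sum_const, nsmul_eq_mul]

section ConstantWeight

variable {ι β : Type*} [Fintype ι] [Zero β] [DecidableEq β]

theorem sum_card_filter_apply_ne_zero (C : Finset (ι → β)) :
    ∑ i, #{c ∈ C | c i ≠ 0} = ∑ c ∈ C, hammingNorm c :=
  sum_card_bipartiteAbove_eq_sum_card_bipartiteBelow (fun i (c : ι → β) => c i ≠ 0)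

theorem sum_sq_card_filter_apply_ne_zero (C : Finset (ι → β)) :
    ∑ i, #{c ∈ C | c i ≠ 0} ^ 2 = ∑ c ∈ C, ∑ c' ∈ C, #{i | c i ≠ 0 ∧ c' i ≠ 0} := by
  have hsq : ∀ i, #{c ∈ C | c i ≠ 0} ^ 2
      = ∑ c ∈ C, ∑ c' ∈ C, if c i ≠ 0 ∧ c' i ≠ 0 then 1 else 0 := by
    intro i
    simp only [card_filter, sq, sum_mul_sum, ite_zero_mul_ite_zero, one_mul, ite_and]
  simp only [hsq]
  rw [sum_comm]
  exact sum_congr rfl fun c _ => by rw [sum_comm]; simp only [card_filter]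

theorem sq_card_mul_le_of_card_filter_and_le {C : Finset (ι → β)} {w : ℕ} {t : ℤ}
    (hweight : ∀ c ∈ C, hammingNorm c = w)
    (hoverlap : ∀ c ∈ C, ∀ c' ∈ C, c ≠ c' → (#{i | c i ≠ 0 ∧ c' i ≠ 0} : ℤ) ≤ t) :
    ((#C : ℤ) * w) ^ 2 ≤ Fintype.card ι * (#C * (w + (#C - 1) * t)) := by
  have hsum : ∑ i, (#{c ∈ C | c i ≠ 0} : ℤ) = #C * w := by
    rw [← Nat.cast_sum, sum_card_filter_apply_ne_zero, sum_congr rfl hweight, sum_const,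
      smul_eq_mul, Nat.cast_mul]
  have hsq : ∑ i, (#{c ∈ C | c i ≠ 0} : ℤ) ^ 2
      = ∑ c ∈ C, ∑ c' ∈ C, (#{i | c i ≠ 0 ∧ c' i ≠ 0} : ℤ) := by
    exact_mod_cast sum_sq_card_filter_apply_ne_zero C
  have hdiag : ∀ c ∈ C, (#{i | c i ≠ 0 ∧ c i ≠ 0} : ℤ) = w := fun c hc => by
    simp only [and_self, ← hweight c hc, hammingNorm]
  calc ((#C : ℤ) * w) ^ 2 = (∑ i, (#{c ∈ C | c i ≠ 0} : ℤ)) ^ 2 := by rw [hsum]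
    _ ≤ Fintype.card ι * ∑ i, (#{c ∈ C | c i ≠ 0} : ℤ) ^ 2 := by
      rw [← card_univ]; exact sq_sum_le_card_mul_sum_sq
    _ ≤ Fintype.card ι * (#C * (w + (#C - 1) * t)) := by
      rw [hsq]
      exact mul_le_mul_of_nonneg_left
        (sum_sum_le_of_diag_of_offDiag C _ _ _ hdiag hoverlap) (by positivity)

end ConstantWeight

theorem two_mul_card_filter_and_add_hammingDist {ι : Type*} [Fintype ι] (c c' : ι → ZMod 2) :
    2 * #{i | c i ≠ 0 ∧ c' i ≠ 0} + hammingDist c c' = hammingNorm c + hammingNorm c' := by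
  have hcoord : ∀ a b : ZMod 2,
      2 * (if a ≠ 0 ∧ b ≠ 0 then 1 else 0) + (if a ≠ b then 1 else 0)
        = (if a ≠ 0 then 1 else 0) + (if b ≠ 0 then 1 else 0) := by
    decide
  simp only [hammingDist, hammingNorm, card_filter, mul_sum, ← sum_add_distrib]
  exact sum_congr rfl fun i _ => hcoord (c i) (c' i)

theorem stmt_5_general (n w δ : ℕ)
    (C : Finset (Fin n → ZMod 2))
    (hweight : ∀ c ∈ C, hammingNorm c = w)
    (hdist : ∀ c ∈ C, ∀ c' ∈ C, c ≠ c' → 2 * δ ≤ hammingDist c c') :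
    (C.card : ℤ) * ((w : ℤ) ^ 2 - w * n + δ * n) ≤ (δ : ℤ) * n := by
  have hoverlap : ∀ c ∈ C, ∀ c' ∈ C, c ≠ c' →
      (#{i | c i ≠ 0 ∧ c' i ≠ 0} : ℤ) ≤ w - δ := by
    intro c hc c' hc' hne
    have hsplit := two_mul_card_filter_and_add_hammingDist c c'
    rw [hweight c hc, hweight c' hc'] at hsplit
    have := hdist c hc c' hc' hne
    omega
  have hjohnson := sq_card_mul_le_of_card_filter_and_le hweight hoverlap
  rw [Fintype.card_fin] at hjohnson
  rcases (#C).eq_zero_or_pos with hempty | hpos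
  · simp only [hempty, Nat.cast_zero, zero_mul]
    positivity
  have hM : (0 : ℤ) < #C := by exact_mod_cast hpos
  refine le_of_mul_le_mul_left ?_ hM
  nlinarith [hjohnson]

/-- Restricted Johnson bound for binary constant weight codes: if `C` is a set of
binary vectors of length `n`, each of Hamming weight `w`, with pairwise Hamming
distance at least `2δ`, and `M = |C|`, then `M(w² − wn + δn) ≤ δn`. -/
theorem stmt_5 (n w δ : ℕ) (hn : 0 < n) (hw : 0 < w) (hδ : 0 < δ) (hwn : w ≤ n)
    (C : Finset (Fin n → ZMod 2))
    (hweight : ∀ c ∈ C, hammingNorm c = w)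
    (hdist : ∀ c ∈ C, ∀ c' ∈ C, c ≠ c' → 2 * δ ≤ hammingDist c c') :
    (C.card : ℤ) * ((w : ℤ) ^ 2 - w * n + δ * n) ≤ (δ : ℤ) * n :=
  stmt_5_general n w δ C hweight hdist
end

section
/- Let q be a prime power and suppose L_1, …, L_ℓ are 2-dimensional subspaces of F_q^4 that pairwise intersect only in the zero vector, and suppose there exist nonzero vectors p_{i,1}, p_{i,2}, p_{i,3} ∈ L_i spanning pairwise distinct 1-dimensional subspaces, such that for all 1 ≤ s < t < u ≤ ℓ and all choices μ, ν, ω ∈ {1,2,3}, the vectors p_{s,μ}, p_{t,ν}, p_{u,ω} are linearly independent. Then 3·(ℓ − 1) + 1 ≤ q^2 + q + 1, and hence ℓ ≤ ⌊(q^2 + q + 3)/3⌋. -/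
/-!
Project from the point `P = p_{ℓ,1}`: a vector `x ∉ ⟨P⟩` is sent to its point in the projective
plane `ℙ(F_q^4 / ⟨P⟩)`, which has `q² + q + 1` points (the planes through `P`). The `3(ℓ - 1)`
points on `L_1, …, L_{ℓ-1}` together with one further point of `L_ℓ` have pairwise distinct
images: for two points of one line `L_i` this is because `L_i ∩ L_ℓ = 0`, and for points
`p_{i,μ}, p_{j,ν}` of distinct lines `L_i, L_j ≠ L_ℓ` it is the independence of
`p_{i,μ}, p_{j,ν}, P`.
-/

open Submodule Module

section

variable {F V : Type*} [Field F] [AddCommGroup V] [Module F V]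

theorem span_singleton_eq_of_mem {x y : V} (hx : x ≠ 0) (h : x ∈ F ∙ y) : F ∙ x = F ∙ y := by
  obtain ⟨a, rfl⟩ := mem_span_singleton.1 h
  exact span_singleton_smul_eq (IsUnit.mk0 a (by rintro rfl; simp at hx)) y

theorem mem_span_singleton_of_mem_sup_of_disjoint {L M : Submodule F V} (hLM : Disjoint L M)
    {x y z : V} (hx : x ∈ L) (hy : y ∈ L) (hz : z ∈ M) (h : x ∈ (F ∙ y) ⊔ (F ∙ z)) : x ∈ F ∙ y := by
  obtain ⟨a, ha, b, hb, rfl⟩ := mem_sup.1 h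
  have hbL : b ∈ L := by
    simpa using sub_mem hx ((span_singleton_le_iff_mem y L).2 hy ha)
  rw [disjoint_def.1 hLM b hbL ((span_singleton_le_iff_mem z M).2 hz hb), add_zero]
  exact ha

theorem LinearIndependent.notMem_sup_span_singleton {x y z : V}
    (h : LinearIndependent F ![x, y, z]) : x ∉ (F ∙ y) ⊔ (F ∙ z) := by
  rw [sup_comm]
  simpa [Fin.tail, span_insert] using (linearIndependent_finSucc.1 h).2

theorem LinearIndependent.notMem_sup_span_singleton_of_swap {x y z : V}
    (h : LinearIndependent F ![y, x, z]) : x ∉ (F ∙ y) ⊔ (F ∙ z) := by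
  refine LinearIndependent.notMem_sup_span_singleton ?_
  convert h.comp _ (Equiv.swap (0 : Fin 3) 1).injective using 1
  ext i; fin_cases i <;> rfl

theorem finrank_quotient_span_singleton {P : V} (hP : P ≠ 0) {n : ℕ} (hV : finrank F V = n + 1) :
    finrank F (V ⧸ F ∙ P) = n := by
  have : Module.Finite F V := Module.finite_of_finrank_eq_succ hV
  have h := (F ∙ P).finrank_quotient_add_finrank
  rw [finrank_span_singleton hP, hV] at h
  omega

theorem mem_sup_of_mk_mkQ_eq_mk_mkQ {P x y : V} (hx : (F ∙ P).mkQ x ≠ 0) (hy : (F ∙ P).mkQ y ≠ 0)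
    (h : Projectivization.mk F _ hx = Projectivization.mk F _ hy) : x ∈ (F ∙ y) ⊔ (F ∙ P) := by
  obtain ⟨a, ha⟩ := (Projectivization.mk_eq_mk_iff' F _ _ hx hy).1 h
  have hP : x - a • y ∈ F ∙ P := by
    rw [← Quotient.mk_eq_zero, Quotient.mk_sub, Quotient.mk_smul]
    simpa [sub_eq_zero] using ha.symm
  rw [← sub_add_cancel x (a • y), add_comm]
  exact add_mem_sup (smul_mem _ a (mem_span_singleton_self y)) hP

theorem card_le_of_forall_mem_sup_span_singleton [Finite F] {n : ℕ} (hV : finrank F V = n + 1)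
    {P : V} (hP : P ≠ 0) {ι : Type*} (f : ι → V) (hf : ∀ t, f t ∉ F ∙ P)
    (hinj : ∀ s t, f s ∈ (F ∙ f t) ⊔ (F ∙ P) → s = t) :
    Nat.card ι ≤ ∑ i ∈ Finset.range n, Nat.card F ^ i := by
  have : Module.Finite F V := Module.finite_of_finrank_eq_succ hV
  have : Finite (V ⧸ F ∙ P) := Module.finite_of_finite F
  have hf' : ∀ t, (F ∙ P).mkQ (f t) ≠ 0 := fun t ↦ by
    simpa [mkQ_apply, Quotient.mk_eq_zero] using hf t
  rw [← Projectivization.card_of_finrank F _ (finrank_quotient_span_singleton hP hV)]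
  exact Nat.card_le_card_of_injective (fun t ↦ Projectivization.mk F _ (hf' t))
    fun s t h ↦ hinj s t (mem_sup_of_mk_mkQ_eq_mk_mkQ _ _ h)

namespace PointedLines

section

variable {ι : Type*} {L : ι → Submodule F V} {p : ι → Fin 3 → V}

theorem eq_of_mem_span_singleton (hp0 : ∀ i μ, p i μ ≠ 0)
    (hpdist : ∀ i, ∀ μ ν : Fin 3, μ ≠ ν → F ∙ p i μ ≠ F ∙ p i ν)
    {i : ι} {μ ν : Fin 3} (h : p i μ ∈ F ∙ p i ν) : μ = ν := by
  by_contra hμν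
  exact hpdist i μ ν hμν (span_singleton_eq_of_mem (hp0 i μ) h)

theorem notMem_of_ne (hdisj : ∀ i j, i ≠ j → L i ⊓ L j = ⊥) (hp0 : ∀ i μ, p i μ ≠ 0)
    (hpL : ∀ i μ, p i μ ∈ L i) {i j : ι} (hij : i ≠ j) (μ : Fin 3) : p i μ ∉ L j := fun h ↦
  hp0 i μ <| disjoint_def.1 (disjoint_iff.2 (hdisj i j hij)) _ (hpL i μ) h

end

section

variable {n : ℕ} {L : Fin (n + 1) → Submodule F V} {p : Fin (n + 1) → Fin 3 → V}

theorem notMem_span_singleton_last (hdisj : ∀ i j, i ≠ j → L i ⊓ L j = ⊥)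
    (hp0 : ∀ i μ, p i μ ≠ 0) (hpL : ∀ i μ, p i μ ∈ L i)
    (hpdist : ∀ i, ∀ μ ν : Fin 3, μ ≠ ν → F ∙ p i μ ≠ F ∙ p i ν)
    {i : Fin (n + 1)} {μ : Fin 3} (hi : i = Fin.last n → μ = 1) :
    p i μ ∉ F ∙ p (Fin.last n) 0 := by
  intro h
  by_cases hiu : i = Fin.last n
  · subst hiu
    exact absurd (eq_of_mem_span_singleton hp0 hpdist h) (by simp [hi rfl])
  · exact notMem_of_ne hdisj hp0 hpL hiu μ ((span_singleton_le_iff_mem _ _).2 (hpL _ 0) h)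

theorem eq_of_mem_sup_span_singleton_last (hdisj : ∀ i j, i ≠ j → L i ⊓ L j = ⊥)
    (hp0 : ∀ i μ, p i μ ≠ 0) (hpL : ∀ i μ, p i μ ∈ L i)
    (hpdist : ∀ i, ∀ μ ν : Fin 3, μ ≠ ν → F ∙ p i μ ≠ F ∙ p i ν)
    (hind : ∀ s t u : Fin (n + 1), s < t → t < u → ∀ μ ν ω : Fin 3,
      LinearIndependent F ![p s μ, p t ν, p u ω])
    {i j : Fin (n + 1)} {μ ν : Fin 3} (hi : i = Fin.last n → μ = 1) (hj : j = Fin.last n → ν = 1)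
    (h : p i μ ∈ (F ∙ p j ν) ⊔ (F ∙ p (Fin.last n) 0)) : i = j ∧ μ = ν := by
  have hdisj' {i j} (hij : i ≠ j) : Disjoint (L i) (L j) := disjoint_iff.2 (hdisj i j hij)
  rcases eq_or_ne i j with rfl | hij
  · refine ⟨rfl, ?_⟩
    by_cases hiu : i = Fin.last n
    · rw [hi hiu, hj hiu]
    · exact eq_of_mem_span_singleton hp0 hpdist <|
        mem_span_singleton_of_mem_sup_of_disjoint (hdisj' hiu) (hpL i μ) (hpL i ν) (hpL _ 0) h
  exfalso
  by_cases hiu : i = Fin.last n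
  · subst hiu
    obtain rfl := hi rfl
    rw [sup_comm] at h
    have := eq_of_mem_span_singleton hp0 hpdist <|
      mem_span_singleton_of_mem_sup_of_disjoint (hdisj' hij) (hpL _ 1) (hpL _ 0) (hpL j ν) h
    exact absurd this (by decide)
  by_cases hju : j = Fin.last n
  · subst hju
    exact notMem_of_ne hdisj hp0 hpL hiu μ <|
      sup_le ((span_singleton_le_iff_mem _ _).2 (hpL _ ν))
        ((span_singleton_le_iff_mem _ _).2 (hpL _ 0)) h
  rcases lt_or_gt_of_ne hij with hlt | hlt
  · exact (hind i j _ hlt (Fin.lt_last_iff_ne_last.2 hju) μ ν 0).notMem_sup_span_singleton h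
  · exact (hind j i _ hlt (Fin.lt_last_iff_ne_last.2 hiu) ν μ 0).notMem_sup_span_singleton_of_swap h

end

end PointedLines

end

open PointedLines

theorem stmt_19_general (q : ℕ) (F : Type*) [Field F] [Fintype F] (hq : Fintype.card F = q)
    (ℓ : ℕ) (L : Fin ℓ → Submodule F (Fin 4 → F))
    (hdisj : ∀ i j, i ≠ j → L i ⊓ L j = ⊥)
    (p : Fin ℓ → Fin 3 → (Fin 4 → F))
    (hp0 : ∀ i μ, p i μ ≠ 0)
    (hpL : ∀ i μ, p i μ ∈ L i)
    (hpdist : ∀ i, ∀ μ ν : Fin 3, μ ≠ ν →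
      Submodule.span F {p i μ} ≠ Submodule.span F {p i ν})
    (hind : ∀ s t u : Fin ℓ, s < t → t < u → ∀ μ ν ω : Fin 3,
      LinearIndependent F ![p s μ, p t ν, p u ω]) :
    3 * (ℓ - 1) + 1 ≤ q ^ 2 + q + 1 ∧ ℓ ≤ (q ^ 2 + q + 3) / 3 := by
  rcases ℓ with _ | n
  · simp
  -- `(last, 2)` would project to the same point as `(last, 1)`.
  let S : Finset (Fin (n + 1) × Fin 3) := Finset.univ \ {(Fin.last n, 0), (Fin.last n, 2)}
  have hS : ∀ t ∈ S, t.1 = Fin.last n → t.2 = 1 := by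
    rintro ⟨i, μ⟩ ht rfl
    fin_cases μ <;> simp_all [S]
  have hcard : Nat.card S = 3 * n + 1 := by
    rw [Nat.card_eq_finsetCard, Finset.card_sdiff_of_subset (Finset.subset_univ _)]
    simp only [Finset.card_univ, Fintype.card_prod, Fintype.card_fin]
    rw [Finset.card_pair (by simp)]
    omega
  have hbound := card_le_of_forall_mem_sup_span_singleton (F := F)
    (finrank_fin_fun F : finrank F (Fin 4 → F) = 3 + 1) (hp0 (Fin.last n) 0)
    (fun t : S ↦ p t.1.1 t.1.2) (fun t ↦ notMem_span_singleton_last hdisj hp0 hpL hpdist (hS t t.2))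
    fun s t h ↦ Subtype.ext <| Prod.ext_iff.2 <|
      eq_of_mem_sup_span_singleton_last hdisj hp0 hpL hpdist hind (hS s s.2) (hS t t.2) h
  rw [hcard, Nat.card_eq_fintype_card, hq] at hbound
  simp only [Finset.sum_range_succ, Finset.sum_range_zero] at hbound
  refine ⟨by lia, ?_⟩
  rw [Nat.le_div_iff_mul_le three_pos]
  lia

/-- If `L_1, …, L_ℓ` are pairwise (trivially-intersecting) 2-dimensional
subspaces of `F_q^4` carrying triples of points `p_{i,1}, p_{i,2}, p_{i,3}`
spanning pairwise distinct 1-dimensional subspaces, such that any three points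
from three distinct lines are linearly independent, then
`3(ℓ−1) + 1 ≤ q² + q + 1` and `ℓ ≤ ⌊(q² + q + 3)/3⌋`. -/
theorem stmt_19 (q : ℕ) (F : Type*) [Field F] [Fintype F] (hq : Fintype.card F = q)
    (ℓ : ℕ) (hℓ : 0 < ℓ) (L : Fin ℓ → Submodule F (Fin 4 → F))
    (hdim : ∀ i, Module.finrank F (L i) = 2)
    (hdisj : ∀ i j, i ≠ j → L i ⊓ L j = ⊥)
    (p : Fin ℓ → Fin 3 → (Fin 4 → F))
    (hp0 : ∀ i μ, p i μ ≠ 0)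
    (hpL : ∀ i μ, p i μ ∈ L i)
    (hpdist : ∀ i, ∀ μ ν : Fin 3, μ ≠ ν →
      Submodule.span F {p i μ} ≠ Submodule.span F {p i ν})
    (hind : ∀ s t u : Fin ℓ, s < t → t < u → ∀ μ ν ω : Fin 3,
      LinearIndependent F ![p s μ, p t ν, p u ω]) :
    3 * (ℓ - 1) + 1 ≤ q ^ 2 + q + 1 ∧ ℓ ≤ (q ^ 2 + q + 3) / 3 :=
  stmt_19_general q F hq ℓ L hdisj p hp0 hpL hpdist hind
end
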